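/- Let x, y, x', y' ∈ ℝ² with x ≠ y and x' ≠ y'. Then |K(x−y) − K(x'−y')| ≤ (|x−x'| + |y−y'|) / (|x−y| |x'−y'|), where K(w) = w^⊥/|w|². -/

import Mathlib

noncomputable section

abbrev E2 := EuclideanSpace ℝ (Fin 2)

/-- Rotation of a planar vector by π/2. -/
def perp (w : E2) : E2 := (WithLp.equiv 2 (Fin 2 → ℝ)).symm ![-w 1, w 0]

/-- The (unnormalized) Biot–Savart kernel. -/
def K (w : E2) : E2 := (1 / ‖w‖ ^ 2) • perp w

/-! `K` is the rotation by π/2 of the inversion `ι w = w / ‖w‖²` in the unit circle. Rotation is an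
isometry and inversion satisfies `‖ι a - ι b‖ = ‖a - b‖ / (‖a‖ ‖b‖)`, so
`‖K(x - y) - K(x' - y')‖ = ‖(x - x') - (y - y')‖ / (‖x - y‖ ‖x' - y'‖)`; the triangle inequality
finishes. -/

open EuclideanGeometry

lemma perp_apply (w : E2) : perp w = ![-w 1, w 0] := rfl

lemma perp_sub (u v : E2) : perp (u - v) = perp u - perp v := by
  ext i
  fin_cases i <;> simp [perp_apply]; ring

lemma perp_smul (c : ℝ) (u : E2) : perp (c • u) = c • perp u := by
  ext i
  fin_cases i <;> simp [perp_apply]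

lemma norm_perp (w : E2) : ‖perp w‖ = ‖w‖ := by
  simp [EuclideanSpace.norm_eq, Fin.sum_univ_two, perp_apply, add_comm]

lemma K_eq_perp_inversion (w : E2) : K w = perp (inversion 0 1 w) := by
  simp [K, inversion, perp_smul]

lemma norm_K_sub_K {a b : E2} (ha : a ≠ 0) (hb : b ≠ 0) :
    ‖K a - K b‖ = ‖a - b‖ / (‖a‖ * ‖b‖) := by
  rw [K_eq_perp_inversion, K_eq_perp_inversion, ← perp_sub, norm_perp, ← dist_eq_norm,
    dist_inversion_inversion ha hb, dist_zero_right, dist_zero_right, dist_eq_norm]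
  ring

theorem stmt_16 (x y x' y' : E2) (h : x ≠ y) (h' : x' ≠ y') :
    ‖K (x - y) - K (x' - y')‖ ≤ (‖x - x'‖ + ‖y - y'‖) / (‖x - y‖ * ‖x' - y'‖) := by
  rw [norm_K_sub_K (sub_ne_zero.2 h) (sub_ne_zero.2 h'),
    show x - y - (x' - y') = (x - x') - (y - y') by abel]
  gcongr
  exact norm_sub_le _ _
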